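/- For every n ≥ 1, ∑_{σ∈S_n(312)} q^{crs(σ)} = ∑_{j=0}^{n−1} (∑_{α∈S_j(231)} q^{crs(α)}) · (∑_{β∈S_{n−1−j}(312)} q^{crs(β)}), where the empty sum over S_0 equals 1. -/

import Mathlib

open Finset Polynomial Equiv

attribute [local instance] Classical.propDecidable

def isCrossing {n : ℕ} (σ : Equiv.Perm (Fin n)) (i j : Fin n) : Prop :=
  (i < j ∧ j < σ i ∧ σ i < σ j) ∨ (σ i < σ j ∧ σ j ≤ i ∧ i < j)

noncomputable def crs {n : ℕ} (σ : Equiv.Perm (Fin n)) : ℕ :=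
  (Finset.univ.filter (fun p : Fin n × Fin n => isCrossing σ p.1 p.2)).card

def avoids123 {n : ℕ} (σ : Equiv.Perm (Fin n)) : Prop :=
  ¬ ∃ i j k : Fin n, i < j ∧ j < k ∧ σ i < σ j ∧ σ j < σ k

def avoids132 {n : ℕ} (σ : Equiv.Perm (Fin n)) : Prop :=
  ¬ ∃ i j k : Fin n, i < j ∧ j < k ∧ σ i < σ k ∧ σ k < σ j

def avoids213 {n : ℕ} (σ : Equiv.Perm (Fin n)) : Prop :=
  ¬ ∃ i j k : Fin n, i < j ∧ j < k ∧ σ j < σ i ∧ σ i < σ k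

def avoids231 {n : ℕ} (σ : Equiv.Perm (Fin n)) : Prop :=
  ¬ ∃ i j k : Fin n, i < j ∧ j < k ∧ σ k < σ i ∧ σ i < σ j

def avoids312 {n : ℕ} (σ : Equiv.Perm (Fin n)) : Prop :=
  ¬ ∃ i j k : Fin n, i < j ∧ j < k ∧ σ j < σ k ∧ σ k < σ i

def avoids321 {n : ℕ} (σ : Equiv.Perm (Fin n)) : Prop :=
  ¬ ∃ i j k : Fin n, i < j ∧ j < k ∧ σ k < σ j ∧ σ j < σ i

noncomputable def ut {n : ℕ} (σ : Equiv.Perm (Fin n)) : ℕ :=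
  (Finset.univ.filter (fun i : Fin n => σ⁻¹ i < i ∧ i < σ i)).card

noncomputable def lt' {n : ℕ} (σ : Equiv.Perm (Fin n)) : ℕ :=
  (Finset.univ.filter (fun i : Fin n => σ i < i ∧ i < σ⁻¹ i)).card

/-!
Let `σ` avoid 312 and have its minimum at position `j`. An entry left of the minimum that
exceeded an entry right of it would form a 312 with the minimum, so `σ = τ ⊕ β` with `τ` of
size `j + 1` ending in its minimum and `β` avoiding 312. No crossing joins the two blocks of a
direct sum, so `crs σ = crs τ + crs β`. Deleting the final minimum of `τ` and taking the
reverse-complement gives a 231-avoider `α`, and every such `α` arises this way. The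
reverse-complement exchanges upper and lower crossings, and raising every entry by one turns
the weak inequality `σ j ≤ i` of a lower crossing into the strict `j < σ i` of an upper one
and back, so `crs τ = crs α`.
-/

section Crossings

variable {n : ℕ} {σ : Perm (Fin n)} {i j : Fin n}

theorem isCrossing.lt (h : isCrossing σ i j) : i < j :=
  h.elim (fun h => h.1) (fun h => h.2.2)

theorem isCrossing.apply_lt (h : isCrossing σ i j) : σ i < σ j :=
  h.elim (fun h => h.2.2) (fun h => h.1)

theorem crs_eq_sum (σ : Perm (Fin n)) :
    crs σ = ∑ i, ∑ j, if isCrossing σ i j then 1 else 0 := by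
  rw [crs, card_filter, Fintype.sum_prod_type]

end Crossings

namespace Equiv.Perm

section DirectSum

variable {m k : ℕ} (σ : Perm (Fin m)) (τ : Perm (Fin k))

noncomputable def directSum : Perm (Fin (m + k)) :=
  finSumFinEquiv.permCongr (σ.sumCongr τ)

@[simp]
theorem directSum_castAdd (i : Fin m) :
    σ.directSum τ (Fin.castAdd k i) = Fin.castAdd k (σ i) := by
  simp [directSum]

@[simp]
theorem directSum_natAdd (i : Fin k) :
    σ.directSum τ (Fin.natAdd m i) = Fin.natAdd m (τ i) := by
  simp [directSum]

theorem directSum_injective : Function.Injective2 (directSum (m := m) (k := k)) := by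
  intro σ σ' τ τ' h
  refine ⟨ext fun i => ?_, ext fun i => ?_⟩
  · simpa using DFunLike.congr_fun h (Fin.castAdd k i)
  · simpa using DFunLike.congr_fun h (Fin.natAdd m i)

theorem exists_directSum_eq (π : Perm (Fin (m + k)))
    (h : ∀ i : Fin m, (π (Fin.castAdd k i) : ℕ) < m) :
    ∃ (σ : Perm (Fin m)) (τ : Perm (Fin k)), σ.directSum τ = π := by
  have hmaps : Set.MapsTo (finSumFinEquiv.symm.permCongr π) (Set.range Sum.inl)
      (Set.range Sum.inl) := by
    rintro _ ⟨i, rfl⟩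
    refine ⟨⟨_, h i⟩, ?_⟩
    simp [← finSumFinEquiv_symm_apply_castAdd]
  obtain ⟨⟨σ, τ⟩, hστ⟩ := mem_sumCongrHom_range_of_perm_mapsTo_inl hmaps
  rw [sumCongrHom_apply] at hστ
  refine ⟨σ, τ, ?_⟩
  rw [directSum, hστ]
  ext
  simp

theorem isCrossing_directSum_castAdd (a b : Fin m) :
    isCrossing (σ.directSum τ) (Fin.castAdd k a) (Fin.castAdd k b) ↔ isCrossing σ a b := by
  simp only [isCrossing, directSum_castAdd, Fin.lt_def, Fin.le_def, Fin.val_castAdd]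

theorem isCrossing_directSum_natAdd (a b : Fin k) :
    isCrossing (σ.directSum τ) (Fin.natAdd m a) (Fin.natAdd m b) ↔ isCrossing τ a b := by
  simp only [isCrossing, directSum_natAdd, Fin.lt_def, Fin.le_def, Fin.val_natAdd]
  omega

theorem not_isCrossing_directSum_castAdd_natAdd (a : Fin m) (b : Fin k) :
    ¬ isCrossing (σ.directSum τ) (Fin.castAdd k a) (Fin.natAdd m b) := by
  simp only [isCrossing, directSum_castAdd, directSum_natAdd, Fin.lt_def, Fin.le_def,
    Fin.val_castAdd, Fin.val_natAdd]
  omega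

theorem not_isCrossing_directSum_natAdd_castAdd (a : Fin k) (b : Fin m) :
    ¬ isCrossing (σ.directSum τ) (Fin.natAdd m a) (Fin.castAdd k b) := fun h => by
  have := h.lt
  simp only [Fin.lt_def, Fin.val_castAdd, Fin.val_natAdd] at this
  omega

theorem crs_directSum : crs (σ.directSum τ) = crs σ + crs τ := by
  simp only [crs_eq_sum, Fin.sum_univ_add, isCrossing_directSum_castAdd,
    isCrossing_directSum_natAdd, not_isCrossing_directSum_castAdd_natAdd,
    not_isCrossing_directSum_natAdd_castAdd, if_false, sum_const_zero, add_zero, zero_add]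

theorem avoids312_directSum_iff : avoids312 (σ.directSum τ) ↔ avoids312 σ ∧ avoids312 τ := by
  simp only [avoids312, not_exists]
  constructor
  · intro h
    refine ⟨fun a b c => ?_, fun a b c => ?_⟩
    · simpa [(Fin.strictMono_castAdd k).lt_iff_lt] using
        h (Fin.castAdd k a) (Fin.castAdd k b) (Fin.castAdd k c)
    · simpa [Fin.natAdd_lt_natAdd_iff] using
        h (Fin.natAdd m a) (Fin.natAdd m b) (Fin.natAdd m c)
  · rintro ⟨hσ, hτ⟩ p q r ⟨hpq, hqr, h1, h2⟩
    induction p using Fin.addCases <;> induction q using Fin.addCases <;>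
      induction r using Fin.addCases <;>
      simp only [directSum_castAdd, directSum_natAdd, (Fin.strictMono_castAdd k).lt_iff_lt,
        Fin.natAdd_lt_natAdd_iff] at hpq hqr h1 h2
    -- An occurrence meeting both blocks would need an entry of the second block below one of
    -- the first.
    all_goals first
      | exact hσ _ _ _ ⟨hpq, hqr, h1, h2⟩
      | exact hτ _ _ _ ⟨hpq, hqr, h1, h2⟩
      | simp only [Fin.lt_def, Fin.val_castAdd, Fin.val_natAdd] at hpq hqr h1 h2; omega

end DirectSum

section RevComplSnoc

variable {j : ℕ} (α : Perm (Fin j))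

/-- In one-line notation: the reverse-complement of `α` shifted up by one, followed by `0`. -/
noncomputable def revComplSnoc : Perm (Fin (j + 1)) :=
  Equiv.ofBijective (Fin.snoc (α := fun _ => Fin (j + 1)) (fun i => (α i.rev).rev.succ) 0) <|
    Finite.injective_iff_bijective.mp <| Fin.snoc_injective_iff.mpr
      ⟨fun a b h => by simpa using h, fun ⟨_, h⟩ => Fin.succ_ne_zero _ h⟩

@[simp]
theorem revComplSnoc_castSucc (i : Fin j) :
    α.revComplSnoc i.castSucc = (α i.rev).rev.succ := by
  simp [revComplSnoc]

@[simp]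
theorem revComplSnoc_last : α.revComplSnoc (Fin.last j) = 0 := by
  simp [revComplSnoc]

theorem revComplSnoc_injective : Function.Injective (revComplSnoc (j := j)) := by
  intro α α' h
  refine Equiv.ext fun i => ?_
  simpa using DFunLike.congr_fun h i.rev.castSucc

theorem exists_revComplSnoc_eq (τ : Perm (Fin (j + 1))) (hτ : τ (Fin.last j) = 0) :
    ∃ α : Perm (Fin j), α.revComplSnoc = τ := by
  have hne (i : Fin j) : τ i.castSucc ≠ 0 := by
    rw [← hτ, τ.injective.ne_iff]
    exact Fin.castSucc_ne_last i
  refine ⟨Equiv.ofBijective (fun i => ((τ i.rev.castSucc).pred (hne _)).rev) <|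
    Finite.injective_iff_bijective.mp fun a b h => by simpa using h, ?_⟩
  ext i
  induction i using Fin.lastCases <;> simp [hτ]

theorem isCrossing_revComplSnoc_castSucc (a b : Fin j) :
    isCrossing α.revComplSnoc a.castSucc b.castSucc ↔ isCrossing α b.rev a.rev := by
  simp only [isCrossing, revComplSnoc_castSucc, Fin.lt_def, Fin.le_def, Fin.val_succ,
    Fin.val_rev, Fin.val_castSucc]
  omega

theorem crs_revComplSnoc : crs α.revComplSnoc = crs α := by
  have hlast (p : Fin (j + 1)) : ¬ isCrossing α.revComplSnoc (Fin.last j) p :=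
    fun h => (Fin.le_last p).not_gt h.lt
  have hlast' (p : Fin (j + 1)) : ¬ isCrossing α.revComplSnoc p (Fin.last j) := fun h => by
    simpa using h.apply_lt
  simp only [crs_eq_sum, Fin.sum_univ_castSucc, isCrossing_revComplSnoc_castSucc, hlast,
    hlast', if_false, sum_const_zero, add_zero]
  rw [sum_comm]
  exact Fintype.sum_equiv Fin.revPerm _ _ fun b =>
    Fintype.sum_equiv Fin.revPerm _ _ fun a => by simp

theorem avoids312_revComplSnoc_iff : avoids312 α.revComplSnoc ↔ avoids231 α := by
  constructor
  · rintro h ⟨a, b, c, hab, hbc, h1, h2⟩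
    refine h ⟨c.rev.castSucc, b.rev.castSucc, a.rev.castSucc, ?_⟩
    simpa [Fin.castSucc_lt_castSucc_iff, Fin.rev_lt_rev] using ⟨hbc, hab, h2, h1⟩
  · rintro h ⟨p, q, r, hpq, hqr, h1, h2⟩
    induction r using Fin.lastCases with
    | last => simp at h1
    | cast c =>
      have hq := hqr.trans (Fin.castSucc_lt_last c)
      obtain ⟨b, rfl⟩ := Fin.exists_castSucc_eq.mpr hq.ne
      obtain ⟨a, rfl⟩ := Fin.exists_castSucc_eq.mpr (hpq.trans hq).ne
      simp only [revComplSnoc_castSucc, Fin.castSucc_lt_castSucc_iff, Fin.succ_lt_succ_iff,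
        Fin.rev_lt_rev] at hpq hqr h1 h2
      exact h ⟨c.rev, b.rev, a.rev, Fin.rev_lt_rev.mpr hqr, Fin.rev_lt_rev.mpr hpq, h2, h1⟩

end RevComplSnoc

end Equiv.Perm

open Equiv.Perm

theorem apply_le_of_avoids312 {n : ℕ} {σ : Perm (Fin n)} (hσ : avoids312 σ) {p : Fin n}
    (hp : (σ p : ℕ) = 0) {i : Fin n} (hi : i ≤ p) : σ i ≤ p := by
  by_contra! hpi
  have hip : i < p := hi.lt_of_ne <| by
    rintro rfl
    rw [Fin.lt_def, hp] at hpi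
    exact Nat.not_lt_zero _ hpi
  have hmaps : Set.MapsTo σ (Set.Ioi p) (Set.Ioi p) := fun r (hr : p < r) => by
    by_contra! hrp
    have hpr : σ p < σ r := by
      rw [Fin.lt_def, hp, Nat.pos_iff_ne_zero, ← hp, Ne, Fin.val_inj, σ.injective.eq_iff]
      exact hr.ne'
    exact hσ ⟨i, p, r, hip, hr, hpr, (not_lt.mp hrp).trans_lt hpi⟩
  exact hi.not_gt (by simpa using perm_symm_mapsTo_of_mapsTo σ hmaps hpi)

theorem exists_directSum_of_avoids312 {j k : ℕ} {σ : Perm (Fin (j + 1 + k))}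
    (hσ : avoids312 σ) (h0 : σ (Fin.castAdd k (Fin.last j)) = 0) :
    ∃ (τ : Perm (Fin (j + 1))) (β : Perm (Fin k)), τ (Fin.last j) = 0 ∧ τ.directSum β = σ := by
  obtain ⟨τ, β, rfl⟩ := exists_directSum_eq σ fun i => by
    have := apply_le_of_avoids312 hσ (by simp [h0])
      ((Fin.strictMono_castAdd k).monotone (Fin.le_last i))
    rw [Fin.le_def] at this
    simpa [Nat.lt_succ_iff] using this
  rw [directSum_castAdd] at h0
  exact ⟨τ, β, Fin.ext (by simpa using congrArg Fin.val h0), rfl⟩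

theorem sum_avoids312_zero_at_eq_mul {R : Type*} [CommSemiring R] (q : R) (j k : ℕ) :
    ∑ σ ∈ univ.filter (fun σ : Perm (Fin (j + 1 + k)) =>
        avoids312 σ ∧ σ (Fin.castAdd k (Fin.last j)) = 0), q ^ crs σ =
      (∑ α ∈ univ.filter (fun α : Perm (Fin j) => avoids231 α), q ^ crs α) *
        ∑ β ∈ univ.filter (fun β : Perm (Fin k) => avoids312 β), q ^ crs β := by
  rw [sum_mul_sum, ← sum_product', eq_comm]
  refine sum_bij (fun p _ => p.1.revComplSnoc.directSum p.2) ?_ ?_ ?_ ?_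
  · rintro ⟨α, β⟩ h
    simp only [mem_product, mem_filter, mem_univ, true_and] at h ⊢
    refine ⟨avoids312_directSum_iff _ _ |>.mpr ⟨(avoids312_revComplSnoc_iff α).mpr h.1, h.2⟩, ?_⟩
    simp [Fin.ext_iff]
  · rintro ⟨α, β⟩ _ ⟨α', β'⟩ _ h
    obtain ⟨hα, hβ⟩ := directSum_injective h
    exact Prod.ext (revComplSnoc_injective hα) hβ
  · intro σ hσ
    simp only [mem_filter, mem_univ, true_and] at hσ
    obtain ⟨τ, β, hτ0, rfl⟩ := exists_directSum_of_avoids312 hσ.1 hσ.2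
    obtain ⟨hτ, hβ⟩ := (avoids312_directSum_iff τ β).mp hσ.1
    obtain ⟨α, rfl⟩ := exists_revComplSnoc_eq τ hτ0
    exact ⟨(α, β), by simp [(avoids312_revComplSnoc_iff α).mp hτ, hβ], rfl⟩
  · rintro ⟨α, β⟩ _
    rw [crs_directSum, crs_revComplSnoc, pow_add]

theorem sum_312_recurrence (n : ℕ) (hn : 1 ≤ n) :
    ∑ σ ∈ Finset.univ.filter (fun σ : Equiv.Perm (Fin n) => avoids312 σ),
        (Polynomial.X : Polynomial ℤ) ^ crs σ =
      ∑ j ∈ Finset.range n,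
        (∑ α ∈ Finset.univ.filter (fun α : Equiv.Perm (Fin j) => avoids231 α),
            (Polynomial.X : Polynomial ℤ) ^ crs α) *
          (∑ β ∈ Finset.univ.filter (fun β : Equiv.Perm (Fin (n - 1 - j)) => avoids312 β),
            (Polynomial.X : Polynomial ℤ) ^ crs β) := by
  rw [← sum_fiberwise_of_maps_to (g := fun σ : Perm (Fin n) => (σ⁻¹ ⟨0, hn⟩ : ℕ))
    (t := range n) fun σ _ => mem_range.mpr (Fin.isLt _)]
  refine sum_congr rfl fun j hj => ?_
  obtain ⟨k, rfl⟩ : ∃ k, n = j + 1 + k := ⟨n - 1 - j, by rw [mem_range] at hj; omega⟩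
  rw [show j + 1 + k - 1 - j = k by omega, ← sum_avoids312_zero_at_eq_mul, filter_filter]
  refine sum_congr (filter_congr fun σ _ => and_congr_right fun _ => ?_) fun _ _ => rfl
  have hval : (σ⁻¹ ⟨0, hn⟩ : ℕ) = j ↔ σ⁻¹ ⟨0, hn⟩ = Fin.castAdd k (Fin.last j) :=
    (Fin.ext_iff (a := σ⁻¹ ⟨0, hn⟩) (b := Fin.castAdd k (Fin.last j))).symm
  rw [hval, Perm.inv_eq_iff_eq, eq_comm]
  rfl
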